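/- arXiv:1111.1748 — 5 statements merged into one kernel-verified Lean document; each statement's English description precedes it below -/
import Mathlib

section
/- Let $\tilde X, \tilde Y, A$ be symmetric $N\times N$ real matrices such that $\begin{pmatrix} \tilde X & 0 \\ 0 & \tilde Y \end{pmatrix} \leq \begin{pmatrix} A & -A \\ -A & A\end{pmatrix}$. Then for every symmetric matrix $P$ with $0 \le P \le I$ and every $t \in [0,2]$, one has $\mathrm{tr}(\tilde X + \tilde Y) \leq 2t\, \mathrm{tr}(P A)$. -/
/-!
Compressing the block inequality with `[I I]` and `[I -I]` gives `S ≤ 0` and `S ≤ 4A` for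
`S = X + Y`. With `Q = (t/2) P`, so that `0 ≤ Q ≤ I`, and since the trace of a product of two
positive semidefinite matrices is nonnegative,
`tr S = tr ((I - Q) S) + tr (Q S) ≤ tr (Q S) ≤ tr (Q (4A)) = 2t tr (P A)`.
-/

open Matrix
open scoped ComplexOrder

section

variable {n 𝕜 : Type*} [RCLike 𝕜]

theorem Matrix.PosSemidef.one_sub_smul [DecidableEq n] {P : Matrix n n 𝕜}
    (hP : (1 - P).PosSemidef) {c : ℝ} (hc₀ : 0 ≤ c) (hc₁ : c ≤ 1) : (1 - c • P).PosSemidef := by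
  rw [show 1 - c • P = (1 - c) • (1 : Matrix n n 𝕜) + c • (1 - P) by module]
  exact (PosSemidef.one.smul (sub_nonneg.mpr hc₁)).add (hP.smul hc₀)

variable [Fintype n]

open scoped MatrixOrder in
theorem Matrix.PosSemidef.trace_mul_nonneg {A B : Matrix n n 𝕜} (hA : A.PosSemidef)
    (hB : B.PosSemidef) : 0 ≤ (A * B).trace := by
  classical
  obtain ⟨C, rfl⟩ := CStarAlgebra.nonneg_iff_eq_star_mul_self.mp hB.nonneg
  rw [star_eq_conjTranspose, ← Matrix.mul_assoc, trace_mul_comm]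
  simpa only [Matrix.mul_assoc] using (hA.mul_mul_conjTranspose_same C).trace_nonneg

theorem Matrix.PosSemidef.add_add_add_of_fromBlocks {B₁₁ B₁₂ B₂₁ B₂₂ : Matrix n n 𝕜}
    (h : (fromBlocks B₁₁ B₁₂ B₂₁ B₂₂).PosSemidef) : (B₁₁ + B₁₂ + B₂₁ + B₂₂).PosSemidef := by
  classical
  convert h.mul_mul_conjTranspose_same (fromCols (1 : Matrix n n 𝕜) 1) using 1
  simp only [fromCols_mul_fromBlocks, conjTranspose_fromCols_eq_fromRows_conjTranspose,
    fromCols_mul_fromRows, conjTranspose_one, one_mul, mul_one]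
  abel

theorem Matrix.PosSemidef.sub_sub_add_of_fromBlocks {B₁₁ B₁₂ B₂₁ B₂₂ : Matrix n n 𝕜}
    (h : (fromBlocks B₁₁ B₁₂ B₂₁ B₂₂).PosSemidef) : (B₁₁ - B₁₂ - B₂₁ + B₂₂).PosSemidef := by
  classical
  convert h.mul_mul_conjTranspose_same (fromCols (1 : Matrix n n 𝕜) (-1)) using 1
  simp only [fromCols_mul_fromBlocks, conjTranspose_fromCols_eq_fromRows_conjTranspose,
    fromCols_mul_fromRows, conjTranspose_one, conjTranspose_neg, one_mul, mul_one, neg_mul,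
    mul_neg]
  abel

theorem Matrix.trace_le_trace_mul_of_posSemidef [DecidableEq n] {S B Q : Matrix n n 𝕜}
    (hS : (-S).PosSemidef) (hSB : (B - S).PosSemidef) (hQ : Q.PosSemidef)
    (hQ₁ : (1 - Q).PosSemidef) : S.trace ≤ (Q * B).trace := by
  have h₁ := hQ₁.trace_mul_nonneg hS
  have h₂ := hQ.trace_mul_nonneg hSB
  simp only [Matrix.sub_mul, Matrix.mul_sub, Matrix.mul_neg, Matrix.one_mul, trace_sub,
    trace_neg] at h₁ h₂
  linear_combination h₁ + h₂

end

theorem stmt_1_general {N : ℕ} (X Y A P : Matrix (Fin N) (Fin N) ℝ) (t : ℝ)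
    (h : (Matrix.fromBlocks A (-A) (-A) A - Matrix.fromBlocks X 0 0 Y).PosSemidef)
    (hP0 : P.PosSemidef) (hP1 : ((1 : Matrix (Fin N) (Fin N) ℝ) - P).PosSemidef)
    (ht : t ∈ Set.Icc (0:ℝ) 2) :
    Matrix.trace (X + Y) ≤ 2 * t * Matrix.trace (P * A) := by
  obtain ⟨ht0, ht2⟩ := ht
  rw [sub_eq_add_neg, fromBlocks_neg, fromBlocks_add, neg_zero, add_zero] at h
  have hS : (-(X + Y)).PosSemidef := by
    rw [show -(X + Y) = A + -X + -A + -A + (A + -Y) by abel]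
    exact h.add_add_add_of_fromBlocks
  have hSA : ((4 : ℝ) • A - (X + Y)).PosSemidef := by
    rw [show (4 : ℝ) • A - (X + Y) = A + -X - -A - -A + (A + -Y) by module]
    exact h.sub_sub_add_of_fromBlocks
  calc (X + Y).trace ≤ ((t / 2) • P * ((4 : ℝ) • A)).trace :=
        trace_le_trace_mul_of_posSemidef hS hSA (hP0.smul (by linarith))
          (hP1.one_sub_smul (by linarith) (by linarith))
    _ = 2 * t * (P * A).trace := by
        rw [Matrix.smul_mul, Matrix.mul_smul, trace_smul, trace_smul, smul_eq_mul, smul_eq_mul]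
        ring

theorem stmt_1 {N : ℕ} (X Y A P : Matrix (Fin N) (Fin N) ℝ) (t : ℝ)
    (hX : X.IsSymm) (hY : Y.IsSymm) (hA : A.IsSymm) (hP : P.IsSymm)
    (h : (Matrix.fromBlocks A (-A) (-A) A - Matrix.fromBlocks X 0 0 Y).PosSemidef)
    (hP0 : P.PosSemidef) (hP1 : ((1 : Matrix (Fin N) (Fin N) ℝ) - P).PosSemidef)
    (ht : t ∈ Set.Icc (0:ℝ) 2) :
    Matrix.trace (X + Y) ≤ 2 * t * Matrix.trace (P * A) :=
  stmt_1_general X Y A P t h hP0 hP1 ht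
end

section
/- Let $\tilde X, \tilde Y, A, C$ be symmetric $N\times N$ real matrices with $\begin{pmatrix} \tilde X & 0 \\ 0 & \tilde Y \end{pmatrix} \leq \begin{pmatrix} A & -A \\ -A & A\end{pmatrix}$ and $A \le C$. Then for every $\tilde\lambda > 0$, every symmetric $P$ with $0 \le P \le I$, and all symmetric $\sigma_1, \sigma_2$, one has $\tilde\lambda\, \mathrm{tr}(\tilde X + \tilde Y) + \mathrm{tr}(\sigma_1^2 \tilde X + \sigma_2^2 \tilde Y) \leq 4\tilde\lambda\, \mathrm{tr}(PA) + \|\sigma_1 - \sigma_2\|^2 \sup_{|e|=1} |Ce\cdot e|$. -/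
/-!
Let `M = [[A - X, -A], [-A, A - Y]] ≥ 0`. Compressing `M` by the block rows `[1, -1]`, `[1, 1]`
and `[σ₁, σ₂]` gives the positive semidefinite matrices `4A - X - Y`, `-(X + Y)` and
`(σ₁ - σ₂) A (σ₁ - σ₂)ᵀ - σ₁ X σ₁ᵀ - σ₂ Y σ₂ᵀ`. Pairing the first two with `P ≥ 0` and `1 - P ≥ 0`
(the trace of a product of positive semidefinite matrices is nonnegative) yields
`tr (X + Y) ≤ 4 tr (P A)`. The third bounds the `σ`-terms by `tr (D A Dᵀ)`, `D = σ₁ - σ₂`, and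
`A ≤ C` with `tr (D C Dᵀ) = ∑ᵢ ⟨C dᵢ, dᵢ⟩` over the rows `dᵢ` of `D` bounds this by
`‖D‖² sup_{|e| = 1} |⟨C e, e⟩|`.
-/

namespace Matrix

variable {m n n₁ n₂ : Type*} [Fintype m] [Fintype n]

theorem PosSemidef.fromBlocks_mul_mul_conjTranspose_same {R : Type*} [CommRing R] [PartialOrder R]
    [StarRing R] [Fintype n₁] [Fintype n₂] {a : Matrix n₁ n₁ R} {b : Matrix n₁ n₂ R}
    {c : Matrix n₂ n₁ R} {d : Matrix n₂ n₂ R} (hM : (fromBlocks a b c d).PosSemidef)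
    (U : Matrix m n₁ R) (V : Matrix m n₂ R) :
    (U * a * Uᴴ + U * b * Vᴴ + V * c * Uᴴ + V * d * Vᴴ).PosSemidef := by
  have := hM.mul_mul_conjTranspose_same (fromCols U V)
  rw [conjTranspose_fromCols_eq_fromRows_conjTranspose, fromCols_mul_fromBlocks,
    fromCols_mul_fromRows, Matrix.add_mul, Matrix.add_mul] at this
  convert this using 1
  abel

open scoped ComplexOrder MatrixOrder in
theorem PosSemidef.trace_mul_nonneg_s4 {𝕜 : Type*} [RCLike 𝕜] [DecidableEq n] {A B : Matrix n n 𝕜}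
    (hA : A.PosSemidef) (hB : B.PosSemidef) : 0 ≤ (A * B).trace := by
  have hS : (CFC.sqrt A)ᴴ = CFC.sqrt A :=
    (nonneg_iff_posSemidef.mp (CFC.sqrt_nonneg A)).isHermitian.eq
  rw [← CFC.sqrt_mul_sqrt_self A hA.nonneg, mul_assoc, trace_mul_comm, mul_assoc]
  simpa [hS, mul_assoc] using (hB.mul_mul_conjTranspose_same (CFC.sqrt A)).trace_nonneg

theorem trace_mul_mul_transpose_mono {A C : Matrix n n ℝ} (hAC : (C - A).PosSemidef)
    (D : Matrix m n ℝ) : (D * A * Dᵀ).trace ≤ (D * C * Dᵀ).trace := by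
  have := (hAC.mul_mul_conjTranspose_same D).trace_nonneg
  rwa [conjTranspose_eq_transpose_of_trivial, Matrix.mul_sub, Matrix.sub_mul, trace_sub,
    sub_nonneg] at this

noncomputable def numericalRadius (C : Matrix n n ℝ) : ℝ :=
  sSup {r : ℝ | ∃ e : n → ℝ, (∑ i, e i ^ 2) = 1 ∧ r = |C *ᵥ e ⬝ᵥ e|}

theorem abs_mulVec_dotProduct_le_numericalRadius (C : Matrix n n ℝ) {e : n → ℝ}
    (he : ∑ i, e i ^ 2 = 1) : |C *ᵥ e ⬝ᵥ e| ≤ C.numericalRadius := by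
  refine le_csSup ⟨∑ i, ∑ j, |C i j|, ?_⟩ ⟨e, he, rfl⟩
  rintro r ⟨e, he, rfl⟩
  have hle (i : n) : |e i| ≤ 1 :=
    (sq_le_one_iff_abs_le_one _).mp (he ▸ Finset.single_le_sum (fun j _ => sq_nonneg (e j))
      (Finset.mem_univ i))
  simp only [dotProduct, mulVec, Finset.sum_mul]
  refine (Finset.abs_sum_le_sum_abs _ _).trans <| Finset.sum_le_sum fun i _ =>
    (Finset.abs_sum_le_sum_abs _ _).trans <| Finset.sum_le_sum fun j _ => ?_
  rw [abs_mul, abs_mul]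
  exact (mul_le_of_le_one_right (by positivity) (hle i)).trans
    (mul_le_of_le_one_right (abs_nonneg _) (hle j))

theorem mulVec_dotProduct_le_numericalRadius (C : Matrix n n ℝ) (v : n → ℝ) :
    C *ᵥ v ⬝ᵥ v ≤ (v ⬝ᵥ v) * C.numericalRadius := by
  by_cases hv : v = 0
  · simp [hv]
  have hvv : 0 ≤ v ⬝ᵥ v := Finset.sum_nonneg fun i _ => mul_self_nonneg (v i)
  set t := √(v ⬝ᵥ v)
  have ht : t ^ 2 = v ⬝ᵥ v := Real.sq_sqrt hvv
  have ht0 : t ≠ 0 := by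
    rw [← pow_ne_zero_iff two_ne_zero, ht]
    exact fun h => hv (dotProduct_self_eq_zero.mp h)
  have he : ∑ i, (t⁻¹ • v) i ^ 2 = 1 := by
    simp only [Pi.smul_apply, smul_eq_mul, mul_pow, ← Finset.mul_sum, sq (v _)]
    rw [← dotProduct, ← ht]
    field_simp
  calc C *ᵥ v ⬝ᵥ v = (v ⬝ᵥ v) * (C *ᵥ (t⁻¹ • v) ⬝ᵥ (t⁻¹ • v)) := by
        rw [mulVec_smul, smul_dotProduct, dotProduct_smul, ← ht]
        simp only [smul_eq_mul]
        field_simp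
    _ ≤ (v ⬝ᵥ v) * C.numericalRadius :=
        mul_le_mul_of_nonneg_left ((le_abs_self _).trans
          (C.abs_mulVec_dotProduct_le_numericalRadius he)) hvv

theorem trace_mul_mul_transpose_le_numericalRadius (D : Matrix m n ℝ) (C : Matrix n n ℝ) :
    (D * C * Dᵀ).trace ≤ (D * Dᵀ).trace * C.numericalRadius := by
  calc (D * C * Dᵀ).trace = ∑ i, C *ᵥ D i ⬝ᵥ D i := by
        refine Finset.sum_congr rfl fun i _ => ?_
        rw [dotProduct_comm, Matrix.mul_assoc]
        rfl
    _ ≤ ∑ i, (D i ⬝ᵥ D i) * C.numericalRadius :=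
        Finset.sum_le_sum fun i _ => C.mulVec_dotProduct_le_numericalRadius (D i)
    _ = (D * Dᵀ).trace * C.numericalRadius := by
        simp only [trace, diag, mul_apply', transpose_apply, Finset.sum_mul]

section

variable {X Y A : Matrix n n ℝ}

theorem trace_add_le_four_mul_trace_mul [DecidableEq n]
    (h : (fromBlocks (A - X) (-A) (-A) (A - Y)).PosSemidef) {P : Matrix n n ℝ}
    (hP0 : P.PosSemidef) (hP1 : (1 - P).PosSemidef) : (X + Y).trace ≤ 4 * (P * A).trace := by
  have h₁ := hP0.trace_mul_nonneg_s4 (h.fromBlocks_mul_mul_conjTranspose_same 1 (-1))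
  have h₂ := hP1.trace_mul_nonneg_s4 (h.fromBlocks_mul_mul_conjTranspose_same 1 1)
  simp only [conjTranspose_one, conjTranspose_neg, Matrix.one_mul, Matrix.mul_one, Matrix.neg_mul,
    Matrix.mul_neg, neg_neg, Matrix.mul_add, Matrix.mul_sub, Matrix.sub_mul, trace_add, trace_sub,
    trace_neg] at h₁ h₂ ⊢
  linarith

theorem trace_mul_mul_transpose_add_le
    (h : (fromBlocks (A - X) (-A) (-A) (A - Y)).PosSemidef) (σ₁ σ₂ : Matrix m n ℝ) :
    (σ₁ * X * σ₁ᵀ).trace + (σ₂ * Y * σ₂ᵀ).trace ≤ ((σ₁ - σ₂) * A * (σ₁ - σ₂)ᵀ).trace := by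
  have := (h.fromBlocks_mul_mul_conjTranspose_same σ₁ σ₂).trace_nonneg
  simp only [conjTranspose_eq_transpose_of_trivial, transpose_sub, Matrix.mul_sub, Matrix.sub_mul,
    Matrix.mul_neg, Matrix.neg_mul, trace_add, trace_sub, trace_neg] at this ⊢
  linarith

end

end Matrix

open Matrix

theorem stmt_4_general {N : ℕ} (X Y A C P : Matrix (Fin N) (Fin N) ℝ) (lam : ℝ)
    (h : (Matrix.fromBlocks A (-A) (-A) A - Matrix.fromBlocks X 0 0 Y).PosSemidef)
    (hAC : (C - A).PosSemidef)
    (hlam : 0 < lam)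
    (hP0 : P.PosSemidef) (hP1 : ((1 : Matrix (Fin N) (Fin N) ℝ) - P).PosSemidef) :
    ∀ σ1 σ2 : Matrix (Fin N) (Fin N) ℝ, σ1.IsSymm → σ2.IsSymm →
      lam * Matrix.trace (X + Y) + Matrix.trace (σ1 ^ 2 * X + σ2 ^ 2 * Y) ≤
        4 * lam * Matrix.trace (P * A) +
          Matrix.trace ((σ1 - σ2) * (σ1 - σ2)ᵀ) *
            sSup {r : ℝ | ∃ e : Fin N → ℝ, (∑ i, e i ^ 2) = 1 ∧ r = |C.mulVec e ⬝ᵥ e|} := by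
  intro σ1 σ2 hσ1 hσ2
  have hM : (fromBlocks (A - X) (-A) (-A) (A - Y)).PosSemidef := by
    convert h using 1
    simp only [sub_eq_add_neg, fromBlocks_neg, fromBlocks_add, neg_zero, add_zero]
  have hsq (σ Z : Matrix (Fin N) (Fin N) ℝ) (hσ : σ.IsSymm) :
      (σ ^ 2 * Z).trace = (σ * Z * σᵀ).trace := by
    rw [hσ.eq, sq, Matrix.mul_assoc, trace_mul_comm, Matrix.mul_assoc]
  rw [trace_add (σ1 ^ 2 * X), hsq σ1 X hσ1, hsq σ2 Y hσ2]
  change _ ≤ _ + _ * C.numericalRadius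
  linarith [mul_le_mul_of_nonneg_left (trace_add_le_four_mul_trace_mul hM hP0 hP1) hlam.le,
    trace_mul_mul_transpose_add_le hM σ1 σ2, trace_mul_mul_transpose_mono hAC (σ1 - σ2),
    trace_mul_mul_transpose_le_numericalRadius (σ1 - σ2) C]

theorem stmt_4 {N : ℕ} (X Y A C P : Matrix (Fin N) (Fin N) ℝ) (lam : ℝ)
    (hX : X.IsSymm) (hY : Y.IsSymm) (hA : A.IsSymm) (hC : C.IsSymm) (hP : P.IsSymm)
    (h : (Matrix.fromBlocks A (-A) (-A) A - Matrix.fromBlocks X 0 0 Y).PosSemidef)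
    (hAC : (C - A).PosSemidef)
    (hlam : 0 < lam)
    (hP0 : P.PosSemidef) (hP1 : ((1 : Matrix (Fin N) (Fin N) ℝ) - P).PosSemidef) :
    ∀ σ1 σ2 : Matrix (Fin N) (Fin N) ℝ, σ1.IsSymm → σ2.IsSymm →
      lam * Matrix.trace (X + Y) + Matrix.trace (σ1 ^ 2 * X + σ2 ^ 2 * Y) ≤
        4 * lam * Matrix.trace (P * A) +
          Matrix.trace ((σ1 - σ2) * (σ1 - σ2)ᵀ) *
            sSup {r : ℝ | ∃ e : Fin N → ℝ, (∑ i, e i ^ 2) = 1 ∧ r = |C.mulVec e ⬝ᵥ e|} :=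
  stmt_4_general X Y A C P lam h hAC hlam hP0 hP1
end

section
/- Let $A$ and $B$ be real symmetric positive definite $N\times N$ matrices with $A \ge \lambda' I$ and $B \ge \lambda' I$ for some $\lambda' > 0$. Then $\|\sqrt{A} - \sqrt{B}\| \le \frac{1}{2\sqrt{\lambda'}} \|A - B\|$, where $\|\cdot\|$ denotes the Hilbert–Schmidt norm and $\sqrt{A}$ denotes the unique symmetric positive definite square root of $A$. -/
/-!
Put `D = S - T` and `c = √λ'`. Since `S ≥ 0` and `S² ≥ c²`, spectral calculus gives `S ≥ c`,
and likewise `T ≥ c`. From `S² - T² = S D + D T` and cyclicity of the trace,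
`tr((S² - T²) D) = tr(D S D) + tr(D T D) ≥ 2c ‖D‖²`, while Cauchy–Schwarz bounds the left side
by `‖S² - T²‖ ‖D‖`.
-/

open Matrix

theorem algebraMap_le_of_algebraMap_sq_le_sq {A : Type*} [TopologicalSpace A] [Ring A]
    [StarRing A] [PartialOrder A] [StarOrderedRing A] [Algebra ℝ A]
    [ContinuousFunctionalCalculus ℝ A IsSelfAdjoint] [NonnegSpectrumClass ℝ A]
    {a : A} {r : ℝ} (ha : 0 ≤ a) (hr : 0 ≤ r) (h : algebraMap ℝ A (r ^ 2) ≤ a ^ 2) :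
    algebraMap ℝ A r ≤ a := by
  have hsa : IsSelfAdjoint a := ha.isSelfAdjoint
  rw [algebraMap_le_iff_le_spectrum (ha := hsa.pow 2)] at h
  rw [algebraMap_le_iff_le_spectrum (ha := hsa)]
  intro x hx
  have hx2 : x ^ 2 ∈ spectrum ℝ (a ^ 2) := by
    have := spectrum.subset_polynomial_aeval a (Polynomial.X ^ 2) ⟨x, hx, rfl⟩
    simpa using this
  exact (pow_le_pow_iff_left₀ hr (spectrum_nonneg_of_nonneg ha hx) two_ne_zero).mp (h _ hx2)

namespace Matrix

variable {m n : Type*} [Fintype m] [Fintype n]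

open scoped MatrixOrder in
theorem PosSemidef.sub_smul_one_of_mul_self_sub_smul_one [DecidableEq n]
    {S : Matrix n n ℝ} {c : ℝ} (hS : S.PosSemidef) (hc : 0 ≤ c)
    (h : (S * S - c ^ 2 • 1).PosSemidef) : (S - c • 1).PosSemidef := by
  simp only [← Algebra.algebraMap_eq_smul_one, ← sq] at h ⊢
  exact algebraMap_le_of_algebraMap_sq_le_sq (nonneg_iff_posSemidef.mpr hS) hc h

theorem trace_mul_transpose_eq_sum {R : Type*} [NonUnitalNonAssocSemiring R]
    (X Y : Matrix m n R) : trace (X * Yᵀ) = ∑ p : m × n, X p.1 p.2 * Y p.1 p.2 := by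
  simp [trace, mul_apply, Fintype.sum_prod_type]

theorem trace_mul_transpose_le_sqrt_mul_sqrt (X Y : Matrix m n ℝ) :
    trace (X * Yᵀ) ≤ √(trace (X * Xᵀ)) * √(trace (Y * Yᵀ)) := by
  simp only [trace_mul_transpose_eq_sum, ← sq]
  exact Real.sum_mul_le_sqrt_mul_sqrt _ _ _

theorem PosSemidef.mul_trace_mul_transpose_le [DecidableEq n] {S : Matrix n n ℝ} {c : ℝ}
    (h : (S - c • 1).PosSemidef) (D : Matrix m n ℝ) :
    c * trace (D * Dᵀ) ≤ trace (D * S * Dᵀ) := by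
  have := (h.mul_mul_conjTranspose_same D).trace_nonneg
  rw [conjTranspose_eq_transpose_of_trivial, Matrix.mul_sub, Matrix.sub_mul, trace_sub,
    Matrix.mul_smul, Matrix.mul_one, Matrix.smul_mul, trace_smul, smul_eq_mul] at this
  linarith

theorem trace_mul_self_sub_mul_self_mul_sub {R : Type*} [CommRing R] (S T : Matrix n n R) :
    trace ((S * S - T * T) * (S - T)) =
      trace ((S - T) * S * (S - T)) + trace ((S - T) * T * (S - T)) := by
  have : (S * S - T * T) * (S - T) = S * ((S - T) * (S - T)) + (S - T) * T * (S - T) := by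
    noncomm_ring
  rw [this, trace_add, ← mul_assoc S, trace_mul_comm (S * _), ← mul_assoc]

theorem two_mul_sqrt_trace_sub_le [DecidableEq n] {S T : Matrix n n ℝ} {c : ℝ}
    (hS : (S - c • 1).PosSemidef) (hT : (T - c • 1).PosSemidef) :
    2 * c * √(trace ((S - T) * (S - T)ᵀ)) ≤
      √(trace ((S * S - T * T) * (S * S - T * T)ᵀ)) := by
  set D := S - T
  set E := S * S - T * T
  have hD : Dᵀ = D := by
    have := (hS.isHermitian.sub hT.isHermitian).eq
    rwa [sub_sub_sub_cancel_right, conjTranspose_eq_transpose_of_trivial] at this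
  have hDD : √(trace (D * Dᵀ)) ^ 2 = trace (D * Dᵀ) := by
    refine Real.sq_sqrt ?_
    rw [trace_mul_transpose_eq_sum]
    exact Finset.sum_nonneg fun _ _ ↦ mul_self_nonneg _
  have key : 2 * c * √(trace (D * Dᵀ)) ^ 2 ≤ √(trace (E * Eᵀ)) * √(trace (D * Dᵀ)) :=
    calc 2 * c * √(trace (D * Dᵀ)) ^ 2 = c * trace (D * Dᵀ) + c * trace (D * Dᵀ) := by
          rw [hDD]; ring
      _ ≤ trace (D * S * Dᵀ) + trace (D * T * Dᵀ) :=
          add_le_add (hS.mul_trace_mul_transpose_le D) (hT.mul_trace_mul_transpose_le D)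
      _ = trace (E * Dᵀ) := by rw [hD, trace_mul_self_sub_mul_self_mul_sub]
      _ ≤ √(trace (E * Eᵀ)) * √(trace (D * Dᵀ)) := trace_mul_transpose_le_sqrt_mul_sqrt E D
  rcases (Real.sqrt_nonneg (trace (D * Dᵀ))).eq_or_lt with h0 | hpos
  · rw [← h0, mul_zero]
    exact Real.sqrt_nonneg _
  · exact le_of_mul_le_mul_right (by nlinarith) hpos

end Matrix

theorem stmt_5 {N : ℕ} (lam' : ℝ) (hlam' : 0 < lam') (A B S T : Matrix (Fin N) (Fin N) ℝ)
    (hA : (A - lam' • 1).PosSemidef) (hB : (B - lam' • 1).PosSemidef)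
    (hS : S.PosDef) (hT : T.PosDef) (hS2 : S * S = A) (hT2 : T * T = B) :
    Real.sqrt (Matrix.trace ((S - T) * (S - T)ᵀ)) ≤
      1 / (2 * Real.sqrt lam') * Real.sqrt (Matrix.trace ((A - B) * (A - B)ᵀ)) := by
  have hc : 0 < √lam' := Real.sqrt_pos.mpr hlam'
  have hsq : √lam' ^ 2 = lam' := Real.sq_sqrt hlam'.le
  have hSc := hS.posSemidef.sub_smul_one_of_mul_self_sub_smul_one hc.le (by rwa [hS2, hsq])
  have hTc := hT.posSemidef.sub_smul_one_of_mul_self_sub_smul_one hc.le (by rwa [hT2, hsq])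
  have h := two_mul_sqrt_trace_sub_le hSc hTc
  rw [hS2, hT2] at h
  rw [one_div, ← div_eq_inv_mul, le_div_iff₀' (by positivity)]
  exact h
end

section
/- With $f$ defined as $f(r) = \frac{1}{4\lambda}\int_0^r e^{-G(\xi)/(4\lambda)} \int_\xi^\delta e^{G(\tau)/(4\lambda)}\,d\tau\,d\xi$ (where $G(\xi) = \int_0^\xi g$, $g \ge 0$ continuous and integrable on $(0,1)$, $\lambda > 0$, $\delta \in (0,1]$), the following estimates hold: (a) $f(r) \le f'(0)\,r$ for all $r \in [0,\delta]$; (b) $f'(0) \le \frac{\delta}{4\lambda} e^{\frac{1}{4\lambda}\int_0^1 g(s)\,ds}$; (c) $f(r) \ge \frac{\delta}{8\lambda} r$ for all $r \in [0,\delta]$, and in particular $f(\delta) \ge \frac{\delta^2}{8\lambda}$. -/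
/-!
Put `u = G / (4λ)`, which is continuous, nondecreasing and nonnegative on `[0, δ]` because
`g ≥ 0`. The integrand `w ξ = exp (-u ξ) ∫_ξ^δ exp u` of `f` is then squeezed on `[0, δ]`:
since `u τ ≥ u ξ` for `τ ≥ ξ`, `w ξ ≥ δ - ξ`, and since `u ξ ≥ 0`, `w ξ ≤ ∫_0^δ exp u = 4λ f'(0)`.
Integrating over `[0, r]` gives (a) and, with `∫_0^r (δ - ξ) ≥ δ r / 2`, gives (c);
(b) is `exp u ≤ exp (G 1 / (4λ))` on `[0, δ]`.
-/

open MeasureTheory intervalIntegral Set Real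

theorem monotoneOn_primitive_of_nonneg {g : ℝ → ℝ} {a b : ℝ}
    (hint : IntervalIntegrable g volume a b) (hg : ∀ s ∈ Ioc a b, 0 ≤ g s) :
    MonotoneOn (fun x => ∫ t in a..x, g t) (Icc a b) := by
  intro x hx y hy hxy
  have hsub : ∀ z ∈ Icc a b, IntervalIntegrable g volume a z := fun z hz =>
    hint.mono_set (uIcc_subset_uIcc left_mem_uIcc (Icc_subset_uIcc hz))
  have hxy_nonneg : 0 ≤ ∫ t in x..y, g t := by
    rw [integral_of_le hxy]
    exact setIntegral_nonneg measurableSet_Ioc fun t ht =>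
      hg t ⟨hx.1.trans_lt ht.1, ht.2.trans hy.2⟩
  have := integral_interval_sub_left (hsub y hy) (hsub x hx)
  simp only
  linarith

theorem integral_exp_le_of_le {u : ℝ → ℝ} {a b M : ℝ} (hab : a ≤ b)
    (hint : IntervalIntegrable (fun τ => exp (u τ)) volume a b) (hM : ∀ τ ∈ Icc a b, u τ ≤ M) :
    ∫ τ in a..b, exp (u τ) ≤ (b - a) * exp M := by
  simpa using integral_mono_on hab hint intervalIntegrable_const fun τ hτ => exp_le_exp.2 (hM τ hτ)

section Weight

variable {u : ℝ → ℝ} {δ : ℝ}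

theorem continuousOn_exp_neg_mul_integral_exp {a : ℝ} (hcont : ContinuousOn u (Icc a δ))
    (haδ : a ≤ δ) :
    ContinuousOn (fun ξ => exp (-u ξ) * ∫ τ in ξ..δ, exp (u τ)) (Icc a δ) := by
  have hexp : ContinuousOn (fun τ => exp (u τ)) (Icc a δ) := continuous_exp.comp_continuousOn hcont
  have hint : IntegrableOn (fun τ => exp (u τ)) (uIcc a δ) volume := by
    rw [uIcc_of_le haδ]; exact hexp.integrableOn_Icc
  have htail := continuousOn_primitive_interval_left hint
  rw [uIcc_of_le haδ] at htail
  exact (continuous_exp.comp_continuousOn hcont.neg).mul htail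

theorem sub_le_exp_neg_mul_integral_exp {ξ : ℝ} (hξ : ξ ≤ δ) (hmono : MonotoneOn u (Icc ξ δ))
    (hint : IntervalIntegrable (fun τ => exp (u τ)) volume ξ δ) :
    δ - ξ ≤ exp (-u ξ) * ∫ τ in ξ..δ, exp (u τ) := by
  have hlow : (δ - ξ) * exp (u ξ) ≤ ∫ τ in ξ..δ, exp (u τ) := by
    simpa using integral_mono_on hξ intervalIntegrable_const hint fun τ hτ =>
      exp_le_exp.2 (hmono ⟨le_rfl, hξ⟩ hτ hτ.1)
  calc δ - ξ = exp (-u ξ) * ((δ - ξ) * exp (u ξ)) := by rw [exp_neg]; field_simp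
    _ ≤ exp (-u ξ) * ∫ τ in ξ..δ, exp (u τ) := by gcongr

theorem exp_neg_mul_integral_exp_le {ξ : ℝ} (h0ξ : 0 ≤ ξ) (hξ : ξ ≤ δ) (hu : 0 ≤ u ξ)
    (hint : IntervalIntegrable (fun τ => exp (u τ)) volume 0 δ) :
    exp (-u ξ) * ∫ τ in ξ..δ, exp (u τ) ≤ ∫ τ in 0..δ, exp (u τ) := by
  have hhead : 0 ≤ ∫ τ in 0..ξ, exp (u τ) := integral_nonneg h0ξ fun τ _ => (exp_pos _).le
  have htail : 0 ≤ ∫ τ in ξ..δ, exp (u τ) := integral_nonneg hξ fun τ _ => (exp_pos _).le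
  have hsplit := integral_interval_sub_left hint
    (hint.mono_set (uIcc_subset_uIcc left_mem_uIcc (Icc_subset_uIcc ⟨h0ξ, hξ⟩)))
  calc exp (-u ξ) * ∫ τ in ξ..δ, exp (u τ) ≤ 1 * ∫ τ in ξ..δ, exp (u τ) := by
        gcongr; exact exp_le_one_iff.2 (neg_nonpos.2 hu)
    _ ≤ ∫ τ in 0..δ, exp (u τ) := by linarith

variable {r : ℝ}

theorem intervalIntegrable_exp_neg_mul_integral_exp (hr : r ∈ Icc 0 δ)
    (hcont : ContinuousOn u (Icc 0 δ)) :
    IntervalIntegrable (fun ξ => exp (-u ξ) * ∫ τ in ξ..δ, exp (u τ)) volume 0 r :=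
  ((continuousOn_exp_neg_mul_integral_exp hcont (hr.1.trans hr.2)).mono
    (Icc_subset_Icc le_rfl hr.2)).intervalIntegrable_of_Icc hr.1

theorem integral_exp_neg_mul_integral_exp_le (hr : r ∈ Icc 0 δ)
    (hcont : ContinuousOn u (Icc 0 δ)) (hu : ∀ ξ ∈ Icc 0 δ, 0 ≤ u ξ) :
    ∫ ξ in 0..r, exp (-u ξ) * ∫ τ in ξ..δ, exp (u τ) ≤ (∫ τ in 0..δ, exp (u τ)) * r := by
  have hδ : 0 ≤ δ := hr.1.trans hr.2
  have hexp := (continuous_exp.comp_continuousOn hcont).intervalIntegrable_of_Icc (μ := volume) hδ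
  simpa [mul_comm] using integral_mono_on hr.1
    (intervalIntegrable_exp_neg_mul_integral_exp hr hcont) intervalIntegrable_const fun ξ hξ =>
    exp_neg_mul_integral_exp_le hξ.1 (hξ.2.trans hr.2) (hu ξ ⟨hξ.1, hξ.2.trans hr.2⟩) hexp

theorem mul_div_two_le_integral_exp_neg_mul_integral_exp (hr : r ∈ Icc 0 δ)
    (hcont : ContinuousOn u (Icc 0 δ)) (hmono : MonotoneOn u (Icc 0 δ)) :
    δ * r / 2 ≤ ∫ ξ in 0..r, exp (-u ξ) * ∫ τ in ξ..δ, exp (u τ) := by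
  have hlin : ∫ ξ in 0..r, (δ - ξ) = δ * r - r ^ 2 / 2 := by
    simp [integral_sub intervalIntegrable_const intervalIntegrable_id]; ring
  have hmono_int : ∫ ξ in 0..r, (δ - ξ) ≤ ∫ ξ in 0..r, exp (-u ξ) * ∫ τ in ξ..δ, exp (u τ) := by
    refine integral_mono_on hr.1 (intervalIntegrable_const.sub intervalIntegrable_id)
      (intervalIntegrable_exp_neg_mul_integral_exp hr hcont)
      fun ξ hξ => sub_le_exp_neg_mul_integral_exp (hξ.2.trans hr.2)
        (hmono.mono (Icc_subset_Icc hξ.1 le_rfl)) ?_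
    exact ((continuous_exp.comp_continuousOn hcont).mono
      (Icc_subset_Icc hξ.1 le_rfl)).intervalIntegrable_of_Icc (hξ.2.trans hr.2)
  nlinarith [hr.1, hr.2]

end Weight

theorem stmt_9_general (lam δ : ℝ) (hlam : 0 < lam) (hδ : δ ∈ Set.Ioc (0:ℝ) 1)
    (g : ℝ → ℝ)
    (hg0 : ∀ s ∈ Set.Ioc (0:ℝ) 1, 0 ≤ g s)
    (hgint : IntervalIntegrable g MeasureTheory.volume 0 1)
    (G f : ℝ → ℝ)
    (hG : ∀ ξ, G ξ = ∫ τ in (0:ℝ)..ξ, g τ)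
    (hf : ∀ r, f r = (1 / (4 * lam)) *
      ∫ ξ in (0:ℝ)..r, Real.exp (-(G ξ) / (4 * lam)) * ∫ τ in ξ..δ, Real.exp (G τ / (4 * lam))) :
    (∀ r ∈ Set.Icc (0:ℝ) δ,
      f r ≤ ((1 / (4 * lam)) * ∫ τ in (0:ℝ)..δ, Real.exp (G τ / (4 * lam))) * r) ∧
    ((1 / (4 * lam)) * ∫ τ in (0:ℝ)..δ, Real.exp (G τ / (4 * lam))) ≤
      δ / (4 * lam) * Real.exp ((1 / (4 * lam)) * ∫ s in (0:ℝ)..1, g s) ∧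
    (∀ r ∈ Set.Icc (0:ℝ) δ, δ / (8 * lam) * r ≤ f r) ∧
    δ ^ 2 / (8 * lam) ≤ f δ := by
  obtain ⟨hδ0, hδ1⟩ := hδ
  have hG_eq : G = fun x => ∫ t in (0:ℝ)..x, g t := funext hG
  have hGmono : MonotoneOn G (Icc 0 1) := hG_eq ▸ monotoneOn_primitive_of_nonneg hgint hg0
  have hGcont : ContinuousOn G (Icc 0 1) := by
    simpa [hG_eq, uIcc_of_le zero_le_one] using continuousOn_primitive_interval' hgint left_mem_uIcc
  have hsub : Icc 0 δ ⊆ Icc (0:ℝ) 1 := Icc_subset_Icc le_rfl hδ1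
  set u := fun τ => G τ / (4 * lam)
  have humono : MonotoneOn u (Icc 0 δ) := fun x hx y hy hxy =>
    div_le_div_of_nonneg_right (hGmono (hsub hx) (hsub hy) hxy) (by positivity)
  have hucont : ContinuousOn u (Icc 0 δ) := (hGcont.mono hsub).div_const _
  have hu_nonneg : ∀ ξ ∈ Icc 0 δ, 0 ≤ u ξ := fun ξ hξ => by
    simpa [u, hG 0] using humono ⟨le_rfl, hδ0.le⟩ hξ hξ.1
  simp only [neg_div] at hf
  have hlower : ∀ r ∈ Icc 0 δ, δ / (8 * lam) * r ≤ f r := fun r hr => by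
    rw [hf]
    have hw := mul_div_two_le_integral_exp_neg_mul_integral_exp hr hucont humono
    calc δ / (8 * lam) * r = 1 / (4 * lam) * (δ * r / 2) := by ring
      _ ≤ _ := by gcongr
  refine ⟨fun r hr => ?_, ?_, hlower, ?_⟩
  · rw [hf, mul_assoc]
    gcongr
    exact integral_exp_neg_mul_integral_exp_le hr hucont hu_nonneg
  · have hbound := integral_exp_le_of_le (M := G 1 / (4 * lam)) hδ0.le
      ((continuous_exp.comp_continuousOn hucont).intervalIntegrable_of_Icc hδ0.le) fun τ hτ =>
        div_le_div_of_nonneg_right (hGmono (hsub hτ) ⟨zero_le_one, le_rfl⟩ (hτ.2.trans hδ1))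
          (by positivity)
    rw [sub_zero] at hbound
    rw [show 1 / (4 * lam) * ∫ s in (0:ℝ)..1, g s = G 1 / (4 * lam) by rw [hG]; ring]
    calc _ ≤ 1 / (4 * lam) * (δ * exp (G 1 / (4 * lam))) := by gcongr
      _ = _ := by ring
  · calc δ ^ 2 / (8 * lam) = δ / (8 * lam) * δ := by ring
      _ ≤ f δ := hlower δ ⟨hδ0.le, le_rfl⟩

theorem stmt_9 (lam δ : ℝ) (hlam : 0 < lam) (hδ : δ ∈ Set.Ioc (0:ℝ) 1)
    (g : ℝ → ℝ) (hg : ContinuousOn g (Set.Ioc 0 1))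
    (hg0 : ∀ s ∈ Set.Ioc (0:ℝ) 1, 0 ≤ g s)
    (hgint : IntervalIntegrable g MeasureTheory.volume 0 1)
    (G f : ℝ → ℝ)
    (hG : ∀ ξ, G ξ = ∫ τ in (0:ℝ)..ξ, g τ)
    (hf : ∀ r, f r = (1 / (4 * lam)) *
      ∫ ξ in (0:ℝ)..r, Real.exp (-(G ξ) / (4 * lam)) * ∫ τ in ξ..δ, Real.exp (G τ / (4 * lam))) :
    (∀ r ∈ Set.Icc (0:ℝ) δ,
      f r ≤ ((1 / (4 * lam)) * ∫ τ in (0:ℝ)..δ, Real.exp (G τ / (4 * lam))) * r) ∧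
    ((1 / (4 * lam)) * ∫ τ in (0:ℝ)..δ, Real.exp (G τ / (4 * lam))) ≤
      δ / (4 * lam) * Real.exp ((1 / (4 * lam)) * ∫ s in (0:ℝ)..1, g s) ∧
    (∀ r ∈ Set.Icc (0:ℝ) δ, δ / (8 * lam) * r ≤ f r) ∧
    δ ^ 2 / (8 * lam) ≤ f δ :=
  stmt_9_general lam δ hlam hδ g hg0 hgint G f hG hf
end

section
/- Let $\lambda > 0$ and let $g \in C((0,\infty);[0,\infty)) \cap L^1(0,1)$ satisfy $\int_0^{+\infty} e^{-\frac{1}{4\lambda}\int_0^r g(s)\,ds}\,dr = +\infty$. For $\delta > 0$ define $f_\delta(r) = \frac{1}{4\lambda}\int_0^r e^{-G(\xi)/(4\lambda)}\int_\xi^\delta e^{G(\tau)/(4\lambda)}\,d\tau\,d\xi$ where $G(\xi) = \int_0^\xi g$. Then for every fixed $\rho > 0$, $\lim_{\delta \to +\infty} \frac{f_\delta(\rho)}{f_\delta(\delta)} = 0$. -/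
/-!
Write `φ = e^{-G/4λ}` and `ψ = e^{G/4λ}`, so that `4λ f_δ(r) = ∫₀ʳ φ(ξ) ∫_ξ^δ ψ`. Since `G ≥ 0`,
`ψ ≥ 1` and `Ψ(δ) = ∫₀^δ ψ → ∞`, while `Φ(R) = ∫₀^R φ → ∞` by assumption. Bounding the inner
integral by `Ψ(δ)` gives `4λ f_δ(ρ) ≤ Φ(ρ) Ψ(δ)`; keeping only `ξ ≤ R` gives
`4λ f_δ(δ) ≥ Φ(R) (Ψ(δ) - Ψ(R)) ≥ Φ(R) Ψ(δ) / 2` for large `δ`. Hence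
`limsup f_δ(ρ) / f_δ(δ) ≤ 2 Φ(ρ) / Φ(R)`, which tends to `0` as `R → ∞`.
-/

open MeasureTheory intervalIntegral Set Filter Topology

theorem MeasureTheory.LocallyIntegrableOn.intervalIntegrable_of_Ici {f : ℝ → ℝ} {c a b : ℝ}
    (hf : LocallyIntegrableOn f (Ici c)) (ha : c ≤ a) (hb : c ≤ b) :
    IntervalIntegrable f volume a b :=
  (hf.integrableOn_compact_subset (fun _ hx => (le_inf ha hb).trans hx.1)
    isCompact_uIcc).intervalIntegrable

theorem intervalIntegrable_of_continuousOn_Ioi {g : ℝ → ℝ} {a b c : ℝ}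
    (hg : ContinuousOn g (Ioi a)) (hc : IntervalIntegrable g volume a c) (hac : a < c)
    (hb : a ≤ b) : IntervalIntegrable g volume a b := by
  rcases le_total b c with hbc | hcb
  · exact hc.mono_set (uIcc_subset_uIcc_left (mem_uIcc_of_le hb hbc))
  · refine hc.trans (ContinuousOn.intervalIntegrable (hg.mono fun x hx => ?_))
    rw [uIcc_of_le hcb] at hx
    exact hac.trans_le hx.1

theorem continuousOn_primitive_Ici {g : ℝ → ℝ} {a : ℝ}
    (hg : ∀ b, a ≤ b → IntervalIntegrable g volume a b) :
    ContinuousOn (fun x => ∫ t in a..x, g t) (Ici a) := by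
  intro x (hx : a ≤ x)
  have hx1 : a ≤ x + 1 := by linarith
  have hcont := continuousOn_primitive_interval' (hg _ hx1) left_mem_uIcc
  rw [uIcc_of_le hx1] at hcont
  refine (hcont x ⟨hx, by linarith⟩).mono_of_mem_nhdsWithin ?_
  exact mem_of_superset (inter_mem_nhdsWithin _ (Iio_mem_nhds (lt_add_one x)))
    fun y hy => ⟨hy.1, hy.2.le⟩

theorem tendsto_integral_atTop_of_one_le {ψ : ℝ → ℝ} (hψ : LocallyIntegrableOn ψ (Ici 0))
    (hψ1 : ∀ x, 0 ≤ x → 1 ≤ ψ x) :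
    Tendsto (fun R => ∫ x in (0:ℝ)..R, ψ x) atTop atTop := by
  refine tendsto_atTop_mono' atTop ?_ tendsto_id
  filter_upwards [eventually_ge_atTop 0] with R hR
  simpa using integral_mono_on hR intervalIntegrable_const
    (hψ.intervalIntegrable_of_Ici le_rfl hR) fun x hx => hψ1 x hx.1

/-- With `φ = e^{-G/4λ}` and `ψ = e^{G/4λ}` this is `4λ f_δ(r)`. -/
noncomputable def nestedIntegral (φ ψ : ℝ → ℝ) (δ r : ℝ) : ℝ :=
  ∫ ξ in (0:ℝ)..r, φ ξ * ∫ τ in ξ..δ, ψ τ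

section NestedIntegral

variable {φ ψ : ℝ → ℝ} {δ ξ r r' R : ℝ}

theorem intervalIntegrable_nestedIntegrand (hφ : LocallyIntegrableOn φ (Ici 0))
    (hψ : LocallyIntegrableOn ψ (Ici 0)) (hr : 0 ≤ r) (hrδ : r ≤ δ) :
    IntervalIntegrable (fun ξ => φ ξ * ∫ τ in ξ..δ, ψ τ) volume 0 r := by
  have hK : ContinuousOn (fun ξ => ∫ τ in ξ..δ, ψ τ) (uIcc 0 δ) :=
    continuousOn_primitive_interval_left
      (hψ.integrableOn_compact_subset (fun _ hx => (le_inf le_rfl (hr.trans hrδ)).trans hx.1)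
        isCompact_uIcc)
  exact (hφ.intervalIntegrable_of_Ici le_rfl hr).mul_continuousOn
    (hK.mono (uIcc_subset_uIcc_left (mem_uIcc_of_le hr hrδ)))

theorem integral_le_integral_of_le_left (hψ : LocallyIntegrableOn ψ (Ici 0))
    (hψ0 : ∀ x, 0 ≤ x → 0 ≤ ψ x) (hξ : 0 ≤ ξ) (hξR : ξ ≤ R) (hRδ : R ≤ δ) :
    ∫ τ in R..δ, ψ τ ≤ ∫ τ in ξ..δ, ψ τ :=
  integral_mono_interval hξR hRδ le_rfl
    (ae_restrict_of_forall_mem measurableSet_Ioc fun x hx => hψ0 x (hξ.trans hx.1.le))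
    (hψ.intervalIntegrable_of_Ici hξ (hξ.trans (hξR.trans hRδ)))

theorem nestedIntegral_nonneg (hφ0 : ∀ x, 0 ≤ x → 0 ≤ φ x) (hψ0 : ∀ x, 0 ≤ x → 0 ≤ ψ x)
    (hr : 0 ≤ r) (hrδ : r ≤ δ) : 0 ≤ nestedIntegral φ ψ δ r :=
  integral_nonneg hr fun ξ hξ => mul_nonneg (hφ0 ξ hξ.1)
    (integral_nonneg (hξ.2.trans hrδ) fun τ hτ => hψ0 τ (hξ.1.trans hτ.1))

theorem nestedIntegral_mono (hφ : LocallyIntegrableOn φ (Ici 0))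
    (hψ : LocallyIntegrableOn ψ (Ici 0)) (hφ0 : ∀ x, 0 ≤ x → 0 ≤ φ x)
    (hψ0 : ∀ x, 0 ≤ x → 0 ≤ ψ x) (hr : 0 ≤ r) (hrr' : r ≤ r') (hr'δ : r' ≤ δ) :
    nestedIntegral φ ψ δ r ≤ nestedIntegral φ ψ δ r' :=
  integral_mono_interval le_rfl hr hrr'
    (ae_restrict_of_forall_mem measurableSet_Ioc fun ξ hξ => mul_nonneg (hφ0 ξ hξ.1.le)
      (integral_nonneg (hξ.2.trans hr'δ) fun τ hτ => hψ0 τ (hξ.1.le.trans hτ.1)))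
    (intervalIntegrable_nestedIntegrand hφ hψ (hr.trans hrr') hr'δ)

theorem nestedIntegral_le_mul (hφ : LocallyIntegrableOn φ (Ici 0))
    (hψ : LocallyIntegrableOn ψ (Ici 0)) (hφ0 : ∀ x, 0 ≤ x → 0 ≤ φ x)
    (hψ0 : ∀ x, 0 ≤ x → 0 ≤ ψ x) (hr : 0 ≤ r) (hrδ : r ≤ δ) :
    nestedIntegral φ ψ δ r ≤ (∫ ξ in (0:ℝ)..r, φ ξ) * ∫ τ in (0:ℝ)..δ, ψ τ := by
  rw [← intervalIntegral.integral_mul_const]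
  refine integral_mono_on hr (intervalIntegrable_nestedIntegrand hφ hψ hr hrδ)
    ((hφ.intervalIntegrable_of_Ici le_rfl hr).mul_const _) fun ξ hξ => ?_
  exact mul_le_mul_of_nonneg_left
    (integral_le_integral_of_le_left hψ hψ0 le_rfl hξ.1 (hξ.2.trans hrδ)) (hφ0 ξ hξ.1)

theorem mul_le_nestedIntegral (hφ : LocallyIntegrableOn φ (Ici 0))
    (hψ : LocallyIntegrableOn ψ (Ici 0)) (hφ0 : ∀ x, 0 ≤ x → 0 ≤ φ x)
    (hψ0 : ∀ x, 0 ≤ x → 0 ≤ ψ x) (hR : 0 ≤ R) (hRδ : R ≤ δ) :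
    (∫ ξ in (0:ℝ)..R, φ ξ) * (∫ τ in R..δ, ψ τ) ≤ nestedIntegral φ ψ δ δ := by
  rw [← intervalIntegral.integral_mul_const]
  calc ∫ ξ in (0:ℝ)..R, φ ξ * ∫ τ in R..δ, ψ τ ≤ nestedIntegral φ ψ δ R :=
        integral_mono_on hR ((hφ.intervalIntegrable_of_Ici le_rfl hR).mul_const _)
          (intervalIntegrable_nestedIntegrand hφ hψ hR hRδ) fun ξ hξ =>
          mul_le_mul_of_nonneg_left (integral_le_integral_of_le_left hψ hψ0 hξ.1 hξ.2 hRδ)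
            (hφ0 ξ hξ.1)
    _ ≤ nestedIntegral φ ψ δ δ := nestedIntegral_mono hφ hψ hφ0 hψ0 hR hRδ le_rfl

theorem eventually_nestedIntegral_div_le (hφ : LocallyIntegrableOn φ (Ici 0))
    (hψ : LocallyIntegrableOn ψ (Ici 0)) (hφ0 : ∀ x, 0 ≤ x → 0 ≤ φ x)
    (hψ0 : ∀ x, 0 ≤ x → 0 ≤ ψ x)
    (hΨ : Tendsto (fun R => ∫ x in (0:ℝ)..R, ψ x) atTop atTop) {ρ : ℝ} (hρ : 0 ≤ ρ)
    (hρR : ρ ≤ R) (hΦR : 0 < ∫ x in (0:ℝ)..R, φ x) :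
    ∀ᶠ δ in atTop, nestedIntegral φ ψ δ ρ / nestedIntegral φ ψ δ δ ≤
      2 * (∫ x in (0:ℝ)..ρ, φ x) / ∫ x in (0:ℝ)..R, φ x := by
  set Φ := fun R => ∫ x in (0:ℝ)..R, φ x
  set Ψ := fun R => ∫ x in (0:ℝ)..R, ψ x
  have hR : 0 ≤ R := hρ.trans hρR
  have hΦρ : 0 ≤ Φ ρ := integral_nonneg hρ fun x hx => hφ0 x hx.1
  filter_upwards [eventually_ge_atTop R, hΨ.eventually_ge_atTop (2 * Ψ R),
    hΨ.eventually_gt_atTop 0] with δ hRδ hΨδ hΨpos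
  have hδ : 0 ≤ δ := hR.trans hRδ
  have htail : ∫ τ in R..δ, ψ τ = Ψ δ - Ψ R :=
    (integral_interval_sub_left (hψ.intervalIntegrable_of_Ici le_rfl hδ)
      (hψ.intervalIntegrable_of_Ici le_rfl hR)).symm
  have hden : Φ R * (Ψ δ / 2) ≤ nestedIntegral φ ψ δ δ := by
    refine le_trans ?_ (mul_le_nestedIntegral hφ hψ hφ0 hψ0 hR hRδ)
    rw [htail]
    exact mul_le_mul_of_nonneg_left (by linarith) hΦR.le
  calc nestedIntegral φ ψ δ ρ / nestedIntegral φ ψ δ δ ≤ Φ ρ * Ψ δ / (Φ R * (Ψ δ / 2)) :=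
        div_le_div₀ (by positivity) (nestedIntegral_le_mul hφ hψ hφ0 hψ0 hρ (hρR.trans hRδ))
          (by positivity) hden
    _ = 2 * Φ ρ / Φ R := by field_simp

theorem tendsto_nestedIntegral_div (hφ : LocallyIntegrableOn φ (Ici 0))
    (hψ : LocallyIntegrableOn ψ (Ici 0)) (hφ0 : ∀ x, 0 ≤ x → 0 ≤ φ x)
    (hψ0 : ∀ x, 0 ≤ x → 0 ≤ ψ x)
    (hΦ : Tendsto (fun R => ∫ x in (0:ℝ)..R, φ x) atTop atTop)
    (hΨ : Tendsto (fun R => ∫ x in (0:ℝ)..R, ψ x) atTop atTop) {ρ : ℝ} (hρ : 0 ≤ ρ) :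
    Tendsto (fun δ => nestedIntegral φ ψ δ ρ / nestedIntegral φ ψ δ δ) atTop (𝓝 0) := by
  have hbound : Tendsto (fun R => 2 * (∫ x in (0:ℝ)..ρ, φ x) / ∫ x in (0:ℝ)..R, φ x)
      atTop (𝓝 0) := tendsto_const_nhds.div_atTop hΦ
  refine tendsto_order.2 ⟨fun a ha => ?_, fun ε hε => ?_⟩
  · filter_upwards [eventually_ge_atTop ρ] with δ hρδ
    exact ha.trans_le (div_nonneg (nestedIntegral_nonneg hφ0 hψ0 hρ hρδ)
      (nestedIntegral_nonneg hφ0 hψ0 (hρ.trans hρδ) le_rfl))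
  · obtain ⟨R, hRε, hρR, hΦR⟩ := ((hbound.eventually (gt_mem_nhds hε)).and
      ((eventually_ge_atTop ρ).and (hΦ.eventually_gt_atTop 0))).exists
    filter_upwards [eventually_nestedIntegral_div_le hφ hψ hφ0 hψ0 hΨ hρ hρR hΦR] with δ hδ
    exact hδ.trans_lt hRε

end NestedIntegral

theorem stmt_15 (lam : ℝ) (hlam : 0 < lam) (g : ℝ → ℝ)
    (hg : ContinuousOn g (Set.Ioi 0)) (hg0 : ∀ s > (0:ℝ), 0 ≤ g s)
    (hgint : IntervalIntegrable g MeasureTheory.volume 0 1)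
    (G : ℝ → ℝ) (hG : ∀ ξ, G ξ = ∫ τ in (0:ℝ)..ξ, g τ)
    (hdiv : Filter.Tendsto (fun R : ℝ => ∫ r in (0:ℝ)..R, Real.exp (-(G r) / (4 * lam)))
      Filter.atTop Filter.atTop)
    (F : ℝ → ℝ → ℝ)
    (hF : ∀ δ r, F δ r = (1 / (4 * lam)) *
      ∫ ξ in (0:ℝ)..r, Real.exp (-(G ξ) / (4 * lam)) * ∫ τ in ξ..δ, Real.exp (G τ / (4 * lam))) :
    ∀ ρ > (0:ℝ), Filter.Tendsto (fun δ => F δ ρ / F δ δ) Filter.atTop (nhds 0) := by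
  intro ρ hρ
  have hGcont : ContinuousOn G (Ici 0) :=
    (continuousOn_primitive_Ici fun _ =>
      intervalIntegrable_of_continuousOn_Ioi hg hgint zero_lt_one).congr fun x _ => hG x
  have hGnn : ∀ x, 0 ≤ x → 0 ≤ G x := fun x hx => by
    rw [hG, integral_of_le hx]
    exact setIntegral_nonneg measurableSet_Ioc fun t ht => hg0 t ht.1
  have hψ : LocallyIntegrableOn (fun τ => Real.exp (G τ / (4 * lam))) (Ici 0) :=
    (Real.continuous_exp.comp_continuousOn (hGcont.div_const _)).locallyIntegrableOn
      measurableSet_Ici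
  have hψ1 : ∀ x, 0 ≤ x → 1 ≤ Real.exp (G x / (4 * lam)) := fun x hx =>
    Real.one_le_exp_iff.2 (div_nonneg (hGnn x hx) (by positivity))
  have hlim := tendsto_nestedIntegral_div
    ((Real.continuous_exp.comp_continuousOn (hGcont.neg.div_const _)).locallyIntegrableOn
      measurableSet_Ici) hψ (fun _ _ => (Real.exp_pos _).le) (fun _ _ => (Real.exp_pos _).le)
    hdiv (tendsto_integral_atTop_of_one_le hψ hψ1) hρ.le
  refine hlim.congr fun δ => ?_
  rw [hF, hF]
  exact (mul_div_mul_left _ _ (by positivity)).symm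
end
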